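/- If A is a stratifiable approximation on L² over a well-founded index set, then its partial stable operator C_A is also stratifiable. -/

import Mathlib

/-- Least fixpoint as the infimum of the prefixpoints (Knaster–Tarski). -/
def lfpSet {α : Type*} [CompleteLattice α] (f : α → α) : α := sInf {a | f a ≤ a}

/-!
The least fixpoint of an operator on `∏ i, L i` is bounded by every prefixpoint. If `f` and `g`
agree on the components `≤ i` of any two arguments agreeing there, then the point equal to
`lfp g` on the components `≤ i` and to `⊤` elsewhere is a prefixpoint of `f`; hence `lfp f ≤ lfp g`
on those components, and symmetrically. Applied to `A¹(·, y)`, `A¹(·, y')` and to `A²(x, ·)`,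
`A²(x', ·)` this gives stratifiability of the partial stable operator.
-/

theorem lfpSet_le {α : Type*} [CompleteLattice α] {f : α → α} {a : α} (h : f a ≤ a) :
    lfpSet f ≤ a :=
  sInf_le h

theorem map_lfpSet {α : Type*} [CompleteLattice α] {f : α → α} (hf : Monotone f) :
    f (lfpSet f) = lfpSet f :=
  OrderHom.map_lfp ⟨f, hf⟩

section Stratified

variable {I : Type*} [Preorder I] {L : I → Type*} [∀ i, CompleteLattice (L i)]

theorem lfpSet_apply_le_of_le_on_Iic (f : (∀ i, L i) → ∀ i, L i) {g : (∀ i, L i) → ∀ i, L i}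
    (hg : Monotone g) (i : I)
    (hfg : ∀ a a' : ∀ i, L i, (∀ j, j ≤ i → a j = a' j) → ∀ j, j ≤ i → f a j ≤ g a' j) :
    ∀ j, j ≤ i → lfpSet f j ≤ lfpSet g j := by
  classical
  set m : ∀ k, L k := fun k => if k ≤ i then lfpSet g k else ⊤
  have hm : ∀ j, j ≤ i → m j = lfpSet g j := fun j hj => if_pos hj
  have hprefix : f m ≤ m := by
    intro k
    by_cases hk : k ≤ i
    · calc f m k ≤ g (lfpSet g) k := hfg m _ hm k hk
        _ = lfpSet g k := congrFun (map_lfpSet hg) k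
        _ = m k := (hm k hk).symm
    · exact le_top.trans_eq (if_neg hk).symm
  intro j hj
  exact (lfpSet_le hprefix j).trans_eq (hm j hj)

theorem lfpSet_apply_eq_of_eq_on_Iic {f g : (∀ i, L i) → ∀ i, L i}
    (hf : Monotone f) (hg : Monotone g) (i : I)
    (hfg : ∀ a a' : ∀ i, L i, (∀ j, j ≤ i → a j = a' j) → ∀ j, j ≤ i → f a j = g a' j) :
    ∀ j, j ≤ i → lfpSet f j = lfpSet g j := fun j hj =>
  le_antisymm
    (lfpSet_apply_le_of_le_on_Iic f hg i (fun a a' h k hk => (hfg a a' h k hk).le) j hj)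
    (lfpSet_apply_le_of_le_on_Iic g hf i
      (fun a a' h k hk => (hfg a' a (fun l hl => (h l hl).symm) k hk).ge) j hj)

end Stratified

theorem partial_stable_operator_stratifiable_general
    {I : Type*} [PartialOrder I]
    {L : I → Type*} [∀ i, CompleteLattice (L i)]
    (A : ((∀ i, L i) × (∀ i, L i)) → ((∀ i, L i) × (∀ i, L i)))
    (hmono : ∀ p q : (∀ i, L i) × (∀ i, L i), p.1 ≤ q.1 → q.2 ≤ p.2 →
        (A p).1 ≤ (A q).1 ∧ (A q).2 ≤ (A p).2)
    (hstrat : ∀ x y x' y' : ∀ i, L i, ∀ i : I,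
        (∀ j, j ≤ i → x j = x' j ∧ y j = y' j) →
        ∀ j, j ≤ i → (A (x, y)).1 j = (A (x', y')).1 j ∧
          (A (x, y)).2 j = (A (x', y')).2 j) :
    ∀ x y x' y' : ∀ i, L i, ∀ i : I,
      (∀ j, j ≤ i → x j = x' j ∧ y j = y' j) →
      ∀ j, j ≤ i →
        lfpSet (fun a => (A (a, y)).1) j = lfpSet (fun a => (A (a, y')).1) j ∧
        lfpSet (fun b => (A (x, b)).2) j = lfpSet (fun b => (A (x', b)).2) j := by
  intro x y x' y' i hxy j hj
  have hmono₁ : ∀ y, Monotone fun a => (A (a, y)).1 := fun y a a' haa' =>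
    (hmono (a, y) (a', y) haa' le_rfl).1
  have hmono₂ : ∀ x, Monotone fun b => (A (x, b)).2 := fun x b b' hbb' =>
    (hmono (x, b') (x, b) le_rfl hbb').2
  exact ⟨lfpSet_apply_eq_of_eq_on_Iic (hmono₁ y) (hmono₁ y') i
      (fun a a' haa' k hk => (hstrat a y a' y' i (fun l hl => ⟨haa' l hl, (hxy l hl).2⟩) k hk).1)
      j hj,
    lfpSet_apply_eq_of_eq_on_Iic (hmono₂ x) (hmono₂ x') i
      (fun b b' hbb' k hk => (hstrat x b x' b' i (fun l hl => ⟨(hxy l hl).1, hbb' l hl⟩) k hk).2)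
      j hj⟩

/-- If A is a stratifiable approximation on L² over a well-founded index set,
then the partial stable operator C_A(x,y) = (lfp A¹(·,y), lfp A²(x,·)) is also
stratifiable. -/
theorem partial_stable_operator_stratifiable
    {I : Type*} [PartialOrder I] [WellFoundedLT I]
    {L : I → Type*} [∀ i, CompleteLattice (L i)]
    (A : ((∀ i, L i) × (∀ i, L i)) → ((∀ i, L i) × (∀ i, L i)))
    (hmono : ∀ p q : (∀ i, L i) × (∀ i, L i), p.1 ≤ q.1 → q.2 ≤ p.2 →
        (A p).1 ≤ (A q).1 ∧ (A q).2 ≤ (A p).2)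
    (hstrat : ∀ x y x' y' : ∀ i, L i, ∀ i : I,
        (∀ j, j ≤ i → x j = x' j ∧ y j = y' j) →
        ∀ j, j ≤ i → (A (x, y)).1 j = (A (x', y')).1 j ∧
          (A (x, y)).2 j = (A (x', y')).2 j) :
    ∀ x y x' y' : ∀ i, L i, ∀ i : I,
      (∀ j, j ≤ i → x j = x' j ∧ y j = y' j) →
      ∀ j, j ≤ i →
        lfpSet (fun a => (A (a, y)).1) j = lfpSet (fun a => (A (a, y')).1) j ∧
        lfpSet (fun b => (A (x, b)).2) j = lfpSet (fun b => (A (x', b)).2) j :=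
  partial_stable_operator_stratifiable_general A hmono hstrat
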